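/- For an N×N skew-symmetric matrix Z with entries Z_{i,j} = (z_i - z_j)/(z_i + z_j), where z_1, ..., z_N are complex numbers with z_i + z_j ≠ 0 for all i, j, and N even, the Pfaffian of Z equals the product over i < j of (z_i - z_j)/(z_i + z_j). -/

import Mathlib

open scoped BigOperators

/-- The Pfaffian of a `2n × 2n` complex matrix, given by the standard
sum over permutations formula. -/
noncomputable def pfaffian {n : ℕ} (A : Matrix (Fin (2 * n)) (Fin (2 * n)) ℂ) : ℂ :=
  (1 / ((2 : ℂ) ^ n * (Nat.factorial n : ℂ))) *
    ∑ σ : Equiv.Perm (Fin (2 * n)),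
      ((Equiv.Perm.sign σ : ℤ) : ℂ) *
        ∏ i : Fin n, A (σ ⟨2 * i.val, by omega⟩) (σ ⟨2 * i.val + 1, by omega⟩)

/-!
Summing over the images `σ 0 = p`, `σ 1 = p.succAbove b` of the first pair expands the Pfaffian
sum of size `2n + 2` into Pfaffian sums of the minors, which by induction are products over
`i < j`. Removing the rows `p` and `b` from such a product, the identity for a fixed `p` becomes
the partial fraction expansion
`∑ b, (t - y b) / (t + y b) * ∏ k ≠ b, (y b + y k) / (y b - y k) = ∏ b, (t - y b) / (t + y b)`
for an odd number of distinct nonzero `y b`, with `t = z p`. It follows from Lagrange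
interpolation of `∏ (X - y b) - ∏ (X + y b)`, of degree less than the number of nodes `-y b`.
If `z` is not injective, both sides vanish: the product has a zero factor, and the matrix is
invariant under a transposition, which reverses the signs in the Pfaffian sum.
-/

open Equiv Equiv.Perm Finset Polynomial Lagrange

def permConsSuccAbove (m : ℕ) (x : Fin (m + 1) × Perm (Fin m)) : Perm (Fin (m + 1)) :=
  x.1.cycleRange.symm * decomposeFin.symm (0, x.2)

@[simp]
lemma permConsSuccAbove_apply_zero (m : ℕ) (p : Fin (m + 1)) (e : Perm (Fin m)) :
    permConsSuccAbove m (p, e) 0 = p := by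
  simp [permConsSuccAbove]

@[simp]
lemma permConsSuccAbove_apply_succ (m : ℕ) (p : Fin (m + 1)) (e : Perm (Fin m)) (k : Fin m) :
    permConsSuccAbove m (p, e) k.succ = p.succAbove (e k) := by
  simp [permConsSuccAbove]

@[simp]
lemma sign_permConsSuccAbove (m : ℕ) (p : Fin (m + 1)) (e : Perm (Fin m)) :
    sign (permConsSuccAbove m (p, e)) = (-1) ^ (p : ℕ) * sign e := by
  simp [permConsSuccAbove]

lemma permConsSuccAbove_bijective (m : ℕ) : Function.Bijective (permConsSuccAbove m) := by
  refine (Fintype.bijective_iff_injective_and_card _).mpr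
    ⟨?_, by simp [Fintype.card_perm, Nat.factorial_succ]⟩
  rintro ⟨p, e⟩ ⟨p', e'⟩ h
  obtain rfl : p = p' := by simpa using Equiv.congr_fun h 0
  have : ∀ k, e k = e' k := fun k =>
    Fin.succAbove_right_injective (p := p) (by simpa using Equiv.congr_fun h k.succ)
  rw [Equiv.ext this]

section CommRing

variable {R : Type*} [CommRing R]

def pfaffianSum {n : ℕ} (A : Matrix (Fin (2 * n)) (Fin (2 * n)) R) : R :=
  ∑ σ : Perm (Fin (2 * n)), ((sign σ : ℤ) : R) *
    ∏ i : Fin n, A (σ ⟨2 * i.val, by omega⟩) (σ ⟨2 * i.val + 1, by omega⟩)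

lemma pfaffianSum_succ {n : ℕ} (A : Matrix (Fin (2 * n + 2)) (Fin (2 * n + 2)) R) :
    pfaffianSum (n := n + 1) A = ∑ p : Fin (2 * n + 2), ∑ b : Fin (2 * n + 1),
      (-1) ^ ((p : ℕ) + b) * A p (p.succAbove b) *
        pfaffianSum (A.submatrix (p.succAbove ∘ b.succAbove) (p.succAbove ∘ b.succAbove)) := by
  change ∑ σ : Perm (Fin (2 * n + 2)), ((sign σ : ℤ) : R) *
    ∏ i : Fin (n + 1), A (σ ⟨2 * i.val, by omega⟩) (σ ⟨2 * i.val + 1, by omega⟩) = _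
  rw [← (permConsSuccAbove_bijective _).sum_comp, Fintype.sum_prod_type]
  refine sum_congr rfl fun p _ => ?_
  rw [← (permConsSuccAbove_bijective _).sum_comp, Fintype.sum_prod_type]
  refine sum_congr rfl fun b _ => ?_
  rw [pfaffianSum, mul_sum]
  refine sum_congr rfl fun τ _ => ?_
  rw [Fin.prod_univ_succ]
  simp only [sign_permConsSuccAbove]
  push_cast
  have hs : ∀ i : Fin n, (⟨2 * i.succ.val, by omega⟩ : Fin (2 * n + 2)) =
      Fin.succ (Fin.succ ⟨2 * i.val, by omega⟩) := fun i => Fin.ext (by simp; ring)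
  have hs' : ∀ i : Fin n, (⟨2 * i.succ.val + 1, by omega⟩ : Fin (2 * n + 2)) =
      Fin.succ (Fin.succ ⟨2 * i.val + 1, by omega⟩) := fun i => Fin.ext (by simp; ring)
  simp only [Fin.val_zero, mul_zero, zero_add, Fin.mk_zero, Fin.mk_one, ← Fin.succ_zero_eq_one,
    hs, hs', permConsSuccAbove_apply_zero, permConsSuccAbove_apply_succ,
    Matrix.submatrix_apply, Function.comp_apply]
  ring

lemma pfaffianSum_eq_zero_of_submatrix_swap {n : ℕ} (A : Matrix (Fin (2 * n)) (Fin (2 * n)) R)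
    {i j : Fin (2 * n)} (hij : i ≠ j) (hA : A.submatrix (swap i j) (swap i j) = A) :
    pfaffianSum A = 0 := by
  refine sum_ninvolution (fun σ => swap i j * σ) (fun σ => ?_) (fun σ _ => ?_) (by simp)
    (fun σ => by simp [← mul_assoc])
  · rw [Perm.sign_mul, sign_swap hij]
    simp only [Perm.mul_apply]
    have : ∀ a b, A (swap i j a) (swap i j b) = A a b := fun a b => congrFun (congrFun hA a) b
    simp only [this]
    push_cast
    ring
  · simpa [mul_eq_right] using hij

def prodAboveDiag {m : ℕ} (A : Matrix (Fin m) (Fin m) R) : R :=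
  ∏ i, ∏ j ∈ Ioi i, A i j

lemma prodAboveDiag_eq_prod_ite {m : ℕ} (A : Matrix (Fin m) (Fin m) R) :
    prodAboveDiag A = ∏ i, ∏ j, if i < j then A i j else 1 := by
  simp only [prodAboveDiag, ← prod_filter, filter_lt_eq_Ioi]

lemma prod_ite_succAbove_lt_eq_neg_one_pow {m : ℕ} (a : Fin (m + 1)) :
    ∏ k : Fin m, (if a.succAbove k < a then (-1 : R) else 1) = (-1) ^ (a : ℕ) := by
  simp only [Fin.succAbove_lt_iff_castSucc_lt]
  simp only [Fin.lt_def, Fin.val_castSucc]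
  rw [prod_ite, prod_const, prod_const_one, mul_one, Fin.card_filter_val_lt,
    min_eq_right (by omega)]

lemma prodAboveDiag_eq_of_antisymm {m : ℕ} (A : Matrix (Fin (m + 1)) (Fin (m + 1)) R)
    (hA : ∀ i j, A j i = -A i j) (a : Fin (m + 1)) :
    prodAboveDiag A = (-1) ^ (a : ℕ) * (∏ k, A a (a.succAbove k)) *
      prodAboveDiag (A.submatrix a.succAbove a.succAbove) := by
  have hpair : ∀ k, (if a < a.succAbove k then A a (a.succAbove k) else 1) *
      (if a.succAbove k < a then A (a.succAbove k) a else 1) =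
      (if a.succAbove k < a then -1 else 1) * A a (a.succAbove k) := by
    intro k
    rcases (Fin.succAbove_ne a k).lt_or_gt with h | h
    · simpa [h, h.not_gt] using hA a (a.succAbove k)
    · simp [h, h.not_gt]
  simp only [prodAboveDiag_eq_prod_ite, Fin.prod_univ_succAbove _ a, lt_irrefl, if_false,
    one_mul, Matrix.submatrix_apply, Fin.succAbove_lt_succAbove_iff]
  rw [prod_mul_distrib, ← mul_assoc, ← prod_mul_distrib]
  simp only [hpair, prod_mul_distrib, prod_ite_succAbove_lt_eq_neg_one_pow]

end CommRing

section CayleyWeight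

variable {K : Type*} [Field K] {ι : Type*} [Fintype ι]

lemma degree_nodal_sub_nodal_neg_lt (y : ι → K) :
    (nodal univ y - nodal univ (-y)).degree < Fintype.card ι := by
  have h := degree_sub_lt_left (p := nodal univ y) (q := nodal univ (-y))
    (by simp [degree_nodal]) nodal_ne_zero (by simp [nodal_monic.leadingCoeff])
  simpa [degree_nodal] using h

variable [DecidableEq ι]

def cayleyWeight (y : ι → K) (b : ι) : K :=
  ∏ k ∈ univ.erase b, (y b + y k) / (y b - y k)

lemma nodalWeight_neg_mul_eval_nodal (y : ι → K) (b : ι) :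
    nodalWeight univ (-y) b * (nodal univ y).eval (-y b) = -(2 * y b * cayleyWeight y b) := by
  rw [nodalWeight, eval_nodal, ← mul_prod_erase _ _ (mem_univ b), cayleyWeight, mul_left_comm,
    ← prod_mul_distrib]
  have : ∀ k, (-y b - -y k)⁻¹ * (-y b - y k) = (y b + y k) / (y b - y k) := fun k => by
    rw [show -y b - -y k = -(y b - y k) by ring, inv_neg, div_eq_inv_mul]; ring
  simp only [Pi.neg_apply, this]
  ring

lemma prod_div_eq_one_sub_sum_cayleyWeight {y : ι → K} (hy : Function.Injective y) {t : K}
    (ht : ∀ b, t + y b ≠ 0) :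
    ∏ b, (t - y b) / (t + y b) = 1 - ∑ b, 2 * y b / (t + y b) * cayleyWeight y b := by
  have hinj : Set.InjOn (-y) (univ : Finset ι) := (neg_injective.comp hy).injOn
  have hnode : ∀ b ∈ (univ : Finset ι), t ≠ (-y) b := fun b _ h => ht b (by simp [h])
  have key := congrArg (eval t) (eq_interpolate hinj (degree_nodal_sub_nodal_neg_lt y))
  rw [eval_interpolate_not_at_node _ hnode] at key
  have hres : ∀ b, nodalWeight univ (-y) b * (t - (-y) b)⁻¹ * (nodal univ y).eval ((-y) b) =
      -(2 * y b / (t + y b) * cayleyWeight y b) := fun b => by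
    rw [mul_right_comm, Pi.neg_apply, nodalWeight_neg_mul_eval_nodal, sub_neg_eq_add]
    ring
  simp only [eval_sub, eval_nodal_at_node (mem_univ _), sub_zero, hres, sum_neg_distrib] at key
  simp only [eval_nodal, Pi.neg_apply, sub_neg_eq_add] at key
  rw [prod_div_distrib, div_eq_iff (prod_ne_zero_iff.mpr fun b _ => ht b)]
  linear_combination key

lemma sum_cayleyWeight [NeZero (2 : K)] (hodd : Odd (Fintype.card ι)) {y : ι → K}
    (hy : Function.Injective y) (hy0 : ∀ b, y b ≠ 0) : ∑ b, cayleyWeight y b = 1 := by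
  have h := prod_div_eq_one_sub_sum_cayleyWeight hy (t := 0) (by simpa using hy0)
  simp only [zero_sub, zero_add, neg_div, div_self (hy0 _), mul_div_assoc, mul_one, prod_const,
    card_univ, hodd.neg_one_pow, ← mul_sum] at h
  have h2 : (2 : K) * ∑ b, cayleyWeight y b = 2 * 1 := by linear_combination h
  exact mul_left_cancel₀ two_ne_zero h2

lemma sum_div_mul_cayleyWeight [NeZero (2 : K)] (hodd : Odd (Fintype.card ι)) {y : ι → K}
    (hy : Function.Injective y) (hy0 : ∀ b, y b ≠ 0) {t : K} (ht : ∀ b, t + y b ≠ 0) :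
    ∑ b, (t - y b) / (t + y b) * cayleyWeight y b = ∏ b, (t - y b) / (t + y b) := by
  have hsplit : ∀ b, (t - y b) / (t + y b) * cayleyWeight y b =
      cayleyWeight y b - 2 * y b / (t + y b) * cayleyWeight y b := fun b => by
    field_simp [ht b]
    ring
  rw [prod_div_eq_one_sub_sum_cayleyWeight hy ht, sum_congr rfl fun b _ => hsplit b,
    sum_sub_distrib, sum_cayleyWeight hodd hy hy0]

end CayleyWeight

lemma Fin.prod_univ_erase_eq_prod_succAbove {M : Type*} [CommMonoid M] {m : ℕ}
    (f : Fin (m + 1) → M) (a : Fin (m + 1)) :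
    ∏ i ∈ univ.erase a, f i = ∏ k, f (a.succAbove k) := by
  rw [Fin.univ_succAbove m a, erase_cons, prod_map, Fin.coe_succAboveEmb]

section CayleyMatrix

variable {K : Type*} [Field K]

def cayleyMatrix {m : ℕ} (z : Fin m → K) : Matrix (Fin m) (Fin m) K :=
  Matrix.of fun i j => (z i - z j) / (z i + z j)

lemma cayleyMatrix_submatrix {k m : ℕ} (z : Fin m → K) (f : Fin k → Fin m) :
    (cayleyMatrix z).submatrix f f = cayleyMatrix (z ∘ f) := rfl

lemma cayleyMatrix_antisymm {m : ℕ} (z : Fin m → K) (i j : Fin m) :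
    cayleyMatrix z j i = -cayleyMatrix z i j := by
  simp only [cayleyMatrix, Matrix.of_apply, add_comm (z j), ← neg_div, neg_sub]

lemma cayleyWeight_mul_prod_cayleyMatrix {m : ℕ} {y : Fin (m + 1) → K}
    (hy : Function.Injective y) (hy' : ∀ i j, y i + y j ≠ 0) (b : Fin (m + 1)) :
    cayleyWeight y b * ∏ k, cayleyMatrix y b (b.succAbove k) = 1 := by
  rw [cayleyWeight, Fin.prod_univ_erase_eq_prod_succAbove, ← prod_mul_distrib]
  refine prod_eq_one fun k _ => ?_
  have hne : y b - y (b.succAbove k) ≠ 0 :=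
    sub_ne_zero.mpr (hy.ne (Fin.succAbove_ne b k).symm)
  rw [cayleyMatrix, Matrix.of_apply, div_mul_div_comm, mul_comm, div_self]
  exact mul_ne_zero hne (hy' _ _)

lemma neg_one_pow_mul_prodAboveDiag_cayleyMatrix_comp_succAbove {m : ℕ} {y : Fin (m + 1) → K}
    (hy : Function.Injective y) (hy' : ∀ i j, y i + y j ≠ 0) (b : Fin (m + 1)) :
    (-1) ^ (b : ℕ) * prodAboveDiag (cayleyMatrix (y ∘ b.succAbove)) =
      cayleyWeight y b * prodAboveDiag (cayleyMatrix y) := by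
  rw [prodAboveDiag_eq_of_antisymm (cayleyMatrix y) (cayleyMatrix_antisymm y) b,
    cayleyMatrix_submatrix]
  linear_combination (-((-1) ^ (b : ℕ) * prodAboveDiag (cayleyMatrix (y ∘ b.succAbove)))) *
    cayleyWeight_mul_prod_cayleyMatrix hy hy' b

lemma prodAboveDiag_cayleyMatrix_eq_sum_succAbove [NeZero (2 : K)] {m : ℕ} (hm : Even m)
    {z : Fin (m + 2) → K} (hz : Function.Injective z) (hz' : ∀ i j, z i + z j ≠ 0)
    (p : Fin (m + 2)) :
    prodAboveDiag (cayleyMatrix z) = ∑ b : Fin (m + 1), (-1) ^ ((p : ℕ) + b) *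
      cayleyMatrix z p (p.succAbove b) *
        prodAboveDiag (cayleyMatrix (z ∘ p.succAbove ∘ b.succAbove)) := by
  set y := z ∘ p.succAbove
  have hy : Function.Injective y := hz.comp Fin.succAbove_right_injective
  have hy' : ∀ i j, y i + y j ≠ 0 := fun i j => hz' _ _
  have hy0 : ∀ b, y b ≠ 0 := fun b h => hy' b b (by rw [h, add_zero])
  have hterm : ∀ b : Fin (m + 1), (-1) ^ ((p : ℕ) + b) * cayleyMatrix z p (p.succAbove b) *
      prodAboveDiag (cayleyMatrix (y ∘ b.succAbove)) = (-1) ^ (p : ℕ) *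
        prodAboveDiag (cayleyMatrix y) * (cayleyMatrix z p (p.succAbove b) * cayleyWeight y b) := by
    intro b
    rw [pow_add]
    linear_combination ((-1) ^ (p : ℕ) * cayleyMatrix z p (p.succAbove b)) *
      neg_one_pow_mul_prodAboveDiag_cayleyMatrix_comp_succAbove hy hy' b
  have hsum : ∑ b, cayleyMatrix z p (p.succAbove b) * cayleyWeight y b =
      ∏ b, cayleyMatrix z p (p.succAbove b) :=
    sum_div_mul_cayleyWeight (by simpa using hm.add_one) hy hy0 (fun b => hz' p _)
  refine Eq.symm ((sum_congr rfl fun b _ => hterm b).trans ?_)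
  rw [← mul_sum, hsum, prodAboveDiag_eq_of_antisymm _ (cayleyMatrix_antisymm z) p,
    cayleyMatrix_submatrix]
  ring

lemma prodAboveDiag_cayleyMatrix_eq_zero {m : ℕ} {z : Fin m → K} {i j : Fin m} (hij : i ≠ j)
    (h : z i = z j) : prodAboveDiag (cayleyMatrix z) = 0 := by
  wlog hlt : i < j generalizing i j
  · exact this hij.symm h.symm (hij.symm.lt_of_le (not_lt.mp hlt))
  exact prod_eq_zero (mem_univ i) (prod_eq_zero (mem_Ioi.mpr hlt) (by simp [cayleyMatrix, h]))

lemma pfaffianSum_cayleyMatrix_eq_zero {n : ℕ} {z : Fin (2 * n) → K} {i j : Fin (2 * n)}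
    (hij : i ≠ j) (h : z i = z j) : pfaffianSum (cayleyMatrix z) = 0 := by
  refine pfaffianSum_eq_zero_of_submatrix_swap _ hij ?_
  have : z ∘ swap i j = z := funext fun k => by
    rcases eq_or_ne k i with rfl | hki
    · simp [h]
    rcases eq_or_ne k j with rfl | hkj
    · simp [h]
    simp [swap_apply_of_ne_of_ne hki hkj]
  rw [cayleyMatrix_submatrix, this]

theorem pfaffianSum_cayleyMatrix_of_injective [NeZero (2 : K)] {n : ℕ} {z : Fin (2 * n) → K}
    (hz : Function.Injective z) (hz' : ∀ i j, z i + z j ≠ 0) :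
    pfaffianSum (cayleyMatrix z) = 2 ^ n * n.factorial * prodAboveDiag (cayleyMatrix z) := by
  induction n with
  | zero => simp [pfaffianSum, prodAboveDiag]
  | succ n ih =>
    have hrow : ∀ p : Fin (2 * n + 2), ∑ b : Fin (2 * n + 1), (-1) ^ ((p : ℕ) + b) *
        cayleyMatrix z p (p.succAbove b) * pfaffianSum ((cayleyMatrix z).submatrix
          (p.succAbove ∘ b.succAbove) (p.succAbove ∘ b.succAbove)) =
        2 ^ n * n.factorial * prodAboveDiag (cayleyMatrix z) := by
      intro p
      rw [prodAboveDiag_cayleyMatrix_eq_sum_succAbove (m := 2 * n) (even_two_mul n) hz hz' p,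
        mul_sum]
      refine sum_congr rfl fun b _ => ?_
      rw [cayleyMatrix_submatrix, ih (hz.comp (Fin.succAbove_right_injective.comp
        Fin.succAbove_right_injective)) fun i j => hz' _ _]
      ring
    rw [pfaffianSum_succ (cayleyMatrix z), sum_congr rfl fun p _ => hrow p, sum_const, card_univ,
      Fintype.card_fin, nsmul_eq_mul, Nat.factorial_succ]
    push_cast
    ring

theorem pfaffianSum_cayleyMatrix [NeZero (2 : K)] {n : ℕ} {z : Fin (2 * n) → K}
    (hz : ∀ i j, z i + z j ≠ 0) :
    pfaffianSum (cayleyMatrix z) = 2 ^ n * n.factorial * prodAboveDiag (cayleyMatrix z) := by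
  by_cases hinj : Function.Injective z
  · exact pfaffianSum_cayleyMatrix_of_injective hinj hz
  obtain ⟨i, j, h, hij⟩ := Function.not_injective_iff.mp hinj
  rw [pfaffianSum_cayleyMatrix_eq_zero hij h, prodAboveDiag_cayleyMatrix_eq_zero hij h, mul_zero]

end CayleyMatrix

theorem pfaffian_cayley_product_general (n : ℕ) (z : Fin (2 * n) → ℂ)
    (hz : ∀ i j, z i + z j ≠ 0) :
    pfaffian (Matrix.of fun i j => (z i - z j) / (z i + z j)) =
      ∏ i : Fin (2 * n), ∏ j ∈ Finset.Ioi i, (z i - z j) / (z i + z j) := by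
  change 1 / (2 ^ n * n.factorial) * pfaffianSum (cayleyMatrix z) = prodAboveDiag (cayleyMatrix z)
  rw [pfaffianSum_cayleyMatrix hz, ← mul_assoc,
    one_div_mul_cancel (by simp [Nat.factorial_ne_zero]), one_mul]

/-- For an even-dimensional skew-symmetric matrix with entries
`(z i - z j)/(z i + z j)`, the Pfaffian equals the product over `i < j` of
`(z i - z j)/(z i + z j)`. -/
theorem pfaffian_cayley_product (n : ℕ) (hn : 0 < n) (z : Fin (2 * n) → ℂ)
    (hz : ∀ i j, z i + z j ≠ 0) :
    pfaffian (Matrix.of fun i j => (z i - z j) / (z i + z j)) =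
      ∏ i : Fin (2 * n), ∏ j ∈ Finset.Ioi i, (z i - z j) / (z i + z j) :=
  pfaffian_cayley_product_general n z hz
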